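/- Let G be a finite abelian group of order q, Y a finite set, W a channel (G, Y, W), and H a proper subgroup of G. Define Z^H_max(W) = max_{d ∈ G\H} Z_d(W). Then the basic polar transforms satisfy Z^H_max(W⁺) ≤ ( Z^H_max(W) )² and Z^H_max(W⁻) ≤ (q + 2)·Z^H_max(W). -/
import Mathlib

open Finset

/-- Bhattacharyya distance between two input symbols. -/
noncomputable def Zpair {G Y : Type} [Fintype Y] (W : G → Y → ℝ) (x x' : G) : ℝ :=
  ∑ y : Y, Real.sqrt (W x y * W x' y)

/-- `Z_d(W) = (1/q)·Σ_{x∈G} Z(W_{x,x+d})`. -/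
noncomputable def Zd {G Y : Type} [Fintype G] [Fintype Y] [Add G]
    (W : G → Y → ℝ) (d : G) : ℝ :=
  (1 / (Fintype.card G : ℝ)) * ∑ x : G, Zpair W x (x + d)

/-- The basic polar transform `W⁻`. -/
noncomputable def polarMinus {G Y : Type} [Fintype G] [AddCommGroup G]
    (W : G → Y → ℝ) : G → Y × Y → ℝ :=
  fun u₁ p => ∑ u₂ : G, (1 / (Fintype.card G : ℝ)) * W (u₁ + u₂) p.1 * W u₂ p.2

/-- The basic polar transform `W⁺`. -/
noncomputable def polarPlus {G Y : Type} [Fintype G] [AddCommGroup G]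
    (W : G → Y → ℝ) : G → Y × Y × G → ℝ :=
  fun u₂ p => (1 / (Fintype.card G : ℝ)) * W (p.2.2 + u₂) p.1 * W u₂ p.2.1

/-- `Z^H_max(W) = max_{d ∈ G\H} Z_d(W)`. -/
noncomputable def ZmaxOff {G Y : Type} [Fintype G] [Fintype Y] [AddCommGroup G]
    (W : G → Y → ℝ) (H : AddSubgroup G) : ℝ :=
  ⨆ d : {d : G // d ∉ H}, Zd W (d : G)

/- ---------------- auxiliary lemmas ---------------- -/

lemma my_sqrt_add_le (x y : ℝ) (hx : 0 ≤ x) (hy : 0 ≤ y) :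
    Real.sqrt (x + y) ≤ Real.sqrt x + Real.sqrt y := by
  have hx' := Real.sq_sqrt hx
  have hy' := Real.sq_sqrt hy
  have h1 : x + y ≤ (Real.sqrt x + Real.sqrt y) ^ 2 := by
    nlinarith [Real.sqrt_nonneg x, Real.sqrt_nonneg y]
  calc Real.sqrt (x + y) ≤ Real.sqrt ((Real.sqrt x + Real.sqrt y) ^ 2) :=
        Real.sqrt_le_sqrt h1
    _ = Real.sqrt x + Real.sqrt y := Real.sqrt_sq (by positivity)

lemma my_sqrt_sum_le {ι : Type*} (s : Finset ι) (f : ι → ℝ) (hf : ∀ i ∈ s, 0 ≤ f i) :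
    Real.sqrt (∑ i ∈ s, f i) ≤ ∑ i ∈ s, Real.sqrt (f i) := by
  induction s using Finset.cons_induction with
  | empty => simp
  | cons a s ha ih =>
    rw [Finset.sum_cons, Finset.sum_cons]
    have h1 : 0 ≤ f a := hf a (Finset.mem_cons_self _ _)
    have h2 : 0 ≤ ∑ i ∈ s, f i :=
      Finset.sum_nonneg fun i hi => hf i (Finset.mem_cons_of_mem hi)
    calc Real.sqrt (f a + ∑ i ∈ s, f i) ≤ Real.sqrt (f a) + Real.sqrt (∑ i ∈ s, f i) :=
          my_sqrt_add_le _ _ h1 h2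
      _ ≤ Real.sqrt (f a) + ∑ i ∈ s, Real.sqrt (f i) := by
          gcongr
          exact ih fun i hi => hf i (Finset.mem_cons_of_mem hi)

section Main

variable {G Y : Type} [Fintype G] [AddCommGroup G] [Fintype Y]

omit [Fintype G] [AddCommGroup G] in
lemma Zpair_nonneg (W : G → Y → ℝ) (x x' : G) : 0 ≤ Zpair W x x' :=
  Finset.sum_nonneg fun _ _ => Real.sqrt_nonneg _

omit [Fintype G] [AddCommGroup G] in
lemma Zpair_le_one (W : G → Y → ℝ) (hW0 : ∀ x y, 0 ≤ W x y)
    (hW1 : ∀ x, ∑ y, W x y = 1) (x x' : G) : Zpair W x x' ≤ 1 := by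
  have h : ∀ y : Y, Real.sqrt (W x y * W x' y) ≤ (W x y + W x' y) / 2 := by
    intro y
    have hx := Real.sq_sqrt (hW0 x y)
    have hx' := Real.sq_sqrt (hW0 x' y)
    rw [show W x y * W x' y = (Real.sqrt (W x y) * Real.sqrt (W x' y)) ^ 2 by
      rw [mul_pow, hx, hx'], Real.sqrt_sq (by positivity)]
    nlinarith [sq_nonneg (Real.sqrt (W x y) - Real.sqrt (W x' y)),
      Real.sqrt_nonneg (W x y), Real.sqrt_nonneg (W x' y)]
  calc Zpair W x x' ≤ ∑ y : Y, (W x y + W x' y) / 2 := Finset.sum_le_sum fun y _ => h y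
    _ = 1 := by
      rw [← Finset.sum_div, Finset.sum_add_distrib, hW1 x, hW1 x']
      norm_num

omit [AddCommGroup G] in
lemma Zd_nonneg (W : G → Y → ℝ) [Add G] (d : G) : 0 ≤ Zd W d :=
  mul_nonneg (by positivity) (Finset.sum_nonneg fun x _ => Zpair_nonneg W x _)

lemma Zd_le_ZmaxOff (W : G → Y → ℝ) (H : AddSubgroup G) {d : G} (hd : d ∉ H) :
    Zd W d ≤ ZmaxOff W H := by
  have : Finite {d : G // d ∉ H} := Subtype.finite
  exact le_ciSup (f := fun d : {d : G // d ∉ H} => Zd W (d : G))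
    (Set.Finite.bddAbove (Set.finite_range _)) ⟨d, hd⟩

/-- key exact identity for the plus transform at the `Zpair` level. -/
lemma Zpair_polarPlus (W : G → Y → ℝ) (hW0 : ∀ x y, 0 ≤ W x y) (a b : G) :
    Zpair (polarPlus W) a b
      = (1 / (Fintype.card G : ℝ)) * (∑ u₁ : G, Zpair W (u₁ + a) (u₁ + b)) * Zpair W a b := by
  classical
  set q : ℝ := (Fintype.card G : ℝ) with hq
  have key : ∀ (u1 : G) (y1 y2 : Y),
      Real.sqrt ((1/q * W (u1+a) y1 * W a y2) * (1/q * W (u1+b) y1 * W b y2))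
        = 1/q * (Real.sqrt (W (u1+a) y1 * W (u1+b) y1) * Real.sqrt (W a y2 * W b y2)) := by
    intro u1 y1 y2
    rw [show (1/q * W (u1+a) y1 * W a y2) * (1/q * W (u1+b) y1 * W b y2)
        = (1/q * (Real.sqrt (W (u1+a) y1 * W (u1+b) y1) * Real.sqrt (W a y2 * W b y2))) ^ 2 by
      rw [mul_pow, mul_pow, Real.sq_sqrt (mul_nonneg (hW0 _ _) (hW0 _ _)),
        Real.sq_sqrt (mul_nonneg (hW0 _ _) (hW0 _ _))]
      ring]
    exact Real.sqrt_sq (by positivity)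
  unfold Zpair polarPlus
  simp only [Fintype.sum_prod_type]
  calc (∑ y1 : Y, ∑ y2 : Y, ∑ u1 : G,
          Real.sqrt ((1/q * W (u1+a) y1 * W a y2) * (1/q * W (u1+b) y1 * W b y2)))
      = ∑ y1 : Y, ∑ y2 : Y, ∑ u1 : G,
          1/q * (Real.sqrt (W (u1+a) y1 * W (u1+b) y1) * Real.sqrt (W a y2 * W b y2)) :=
        Finset.sum_congr rfl fun y1 _ => Finset.sum_congr rfl fun y2 _ =>
          Finset.sum_congr rfl fun u1 _ => key u1 y1 y2
    _ = ∑ y1 : Y, ∑ u1 : G, ∑ y2 : Y,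
          1/q * (Real.sqrt (W (u1+a) y1 * W (u1+b) y1) * Real.sqrt (W a y2 * W b y2)) :=
        Finset.sum_congr rfl fun y1 _ => Finset.sum_comm
    _ = ∑ u1 : G, ∑ y1 : Y, ∑ y2 : Y,
          1/q * (Real.sqrt (W (u1+a) y1 * W (u1+b) y1) * Real.sqrt (W a y2 * W b y2)) :=
        Finset.sum_comm
    _ = ∑ u1 : G, 1/q * ((∑ y : Y, Real.sqrt (W (u1+a) y * W (u1+b) y)) *
          (∑ y : Y, Real.sqrt (W a y * W b y))) := by
        refine Finset.sum_congr rfl fun u1 _ => ?_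
        rw [Finset.sum_mul_sum, Finset.mul_sum]
        exact Finset.sum_congr rfl fun y1 _ => by rw [Finset.mul_sum]
    _ = 1/q * (∑ u1 : G, ∑ y : Y, Real.sqrt (W (u1+a) y * W (u1+b) y)) *
          (∑ y : Y, Real.sqrt (W a y * W b y)) := by
        rw [← Finset.mul_sum, ← Finset.sum_mul, mul_assoc]

/-- `Z_d(W⁺) = Z_d(W)²`. -/
lemma Zd_polarPlus (W : G → Y → ℝ) (hW0 : ∀ x y, 0 ≤ W x y) (d : G) :
    Zd (polarPlus W) d = (Zd W d) ^ 2 := by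
  classical
  set q : ℝ := (Fintype.card G : ℝ) with hq
  have h : ∀ a : G, Zpair (polarPlus W) a (a + d)
      = 1/q * (∑ x : G, Zpair W x (x + d)) * Zpair W a (a + d) := by
    intro a
    rw [Zpair_polarPlus W hW0 a (a+d)]
    congr 2
    calc (∑ u₁ : G, Zpair W (u₁ + a) (u₁ + (a + d)))
        = ∑ u₁ : G, Zpair W (u₁ + a) ((u₁ + a) + d) := by
          refine Finset.sum_congr rfl fun u1 _ => ?_
          rw [add_assoc]
      _ = ∑ x : G, Zpair W x (x + d) :=
          Equiv.sum_comp (Equiv.addRight a) (fun x => Zpair W x (x + d))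
  unfold Zd
  rw [Finset.sum_congr rfl fun a _ => h a, ← Finset.mul_sum]
  ring

/-- the key inequality for the minus transform at the `Zpair` level. -/
lemma Zpair_polarMinus_le (W : G → Y → ℝ) (hW0 : ∀ x y, 0 ≤ W x y) (a b : G) :
    Zpair (polarMinus W) a b
      ≤ (1 / (Fintype.card G : ℝ)) *
          ∑ u₂ : G, ∑ v₂ : G, Zpair W (a + u₂) (b + v₂) * Zpair W u₂ v₂ := by
  classical
  set q : ℝ := (Fintype.card G : ℝ) with hq
  have key : ∀ (u2 v2 : G) (y1 y2 : Y),
      Real.sqrt ((1/q * W (a+u2) y1 * W u2 y2) * (1/q * W (b+v2) y1 * W v2 y2))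
        = 1/q * (Real.sqrt (W (a+u2) y1 * W (b+v2) y1) * Real.sqrt (W u2 y2 * W v2 y2)) := by
    intro u2 v2 y1 y2
    rw [show (1/q * W (a+u2) y1 * W u2 y2) * (1/q * W (b+v2) y1 * W v2 y2)
        = (1/q * (Real.sqrt (W (a+u2) y1 * W (b+v2) y1) * Real.sqrt (W u2 y2 * W v2 y2))) ^ 2 by
      rw [mul_pow, mul_pow, Real.sq_sqrt (mul_nonneg (hW0 _ _) (hW0 _ _)),
        Real.sq_sqrt (mul_nonneg (hW0 _ _) (hW0 _ _))]
      ring]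
    exact Real.sqrt_sq (by positivity)
  unfold Zpair polarMinus
  simp only [Fintype.sum_prod_type]
  calc (∑ y1 : Y, ∑ y2 : Y,
          Real.sqrt ((∑ u2 : G, 1/q * W (a+u2) y1 * W u2 y2) *
            (∑ v2 : G, 1/q * W (b+v2) y1 * W v2 y2)))
      ≤ ∑ y1 : Y, ∑ y2 : Y, ∑ u2 : G, ∑ v2 : G,
          Real.sqrt ((1/q * W (a+u2) y1 * W u2 y2) * (1/q * W (b+v2) y1 * W v2 y2)) := by
        refine Finset.sum_le_sum fun y1 _ => Finset.sum_le_sum fun y2 _ => ?_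
        rw [Finset.sum_mul_sum]
        calc Real.sqrt (∑ u2 : G, ∑ v2 : G,
                (1/q * W (a+u2) y1 * W u2 y2) * (1/q * W (b+v2) y1 * W v2 y2))
            ≤ ∑ u2 : G, Real.sqrt (∑ v2 : G,
                (1/q * W (a+u2) y1 * W u2 y2) * (1/q * W (b+v2) y1 * W v2 y2)) := by
              refine my_sqrt_sum_le _ _ fun u2 _ => Finset.sum_nonneg fun v2 _ => ?_
              have h1 : (0:ℝ) ≤ 1/q * W (a+u2) y1 * W u2 y2 := by
                have := hW0 (a+u2) y1; have := hW0 u2 y2; positivity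
              have h2 : (0:ℝ) ≤ 1/q * W (b+v2) y1 * W v2 y2 := by
                have := hW0 (b+v2) y1; have := hW0 v2 y2; positivity
              exact mul_nonneg h1 h2
          _ ≤ ∑ u2 : G, ∑ v2 : G, Real.sqrt
                ((1/q * W (a+u2) y1 * W u2 y2) * (1/q * W (b+v2) y1 * W v2 y2)) := by
              refine Finset.sum_le_sum fun u2 _ => ?_
              refine my_sqrt_sum_le _ _ fun v2 _ => ?_
              have h1 : (0:ℝ) ≤ 1/q * W (a+u2) y1 * W u2 y2 := by
                have := hW0 (a+u2) y1; have := hW0 u2 y2; positivity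
              have h2 : (0:ℝ) ≤ 1/q * W (b+v2) y1 * W v2 y2 := by
                have := hW0 (b+v2) y1; have := hW0 v2 y2; positivity
              exact mul_nonneg h1 h2
    _ = ∑ y1 : Y, ∑ y2 : Y, ∑ u2 : G, ∑ v2 : G,
          1/q * (Real.sqrt (W (a+u2) y1 * W (b+v2) y1) * Real.sqrt (W u2 y2 * W v2 y2)) :=
        Finset.sum_congr rfl fun y1 _ => Finset.sum_congr rfl fun y2 _ =>
          Finset.sum_congr rfl fun u2 _ => Finset.sum_congr rfl fun v2 _ => key u2 v2 y1 y2
    _ = ∑ y1 : Y, ∑ u2 : G, ∑ y2 : Y, ∑ v2 : G,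
          1/q * (Real.sqrt (W (a+u2) y1 * W (b+v2) y1) * Real.sqrt (W u2 y2 * W v2 y2)) :=
        Finset.sum_congr rfl fun y1 _ => Finset.sum_comm
    _ = ∑ u2 : G, ∑ y1 : Y, ∑ y2 : Y, ∑ v2 : G,
          1/q * (Real.sqrt (W (a+u2) y1 * W (b+v2) y1) * Real.sqrt (W u2 y2 * W v2 y2)) :=
        Finset.sum_comm
    _ = ∑ u2 : G, ∑ y1 : Y, ∑ v2 : G, ∑ y2 : Y,
          1/q * (Real.sqrt (W (a+u2) y1 * W (b+v2) y1) * Real.sqrt (W u2 y2 * W v2 y2)) :=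
        Finset.sum_congr rfl fun u2 _ => Finset.sum_congr rfl fun y1 _ => Finset.sum_comm
    _ = ∑ u2 : G, ∑ v2 : G, ∑ y1 : Y, ∑ y2 : Y,
          1/q * (Real.sqrt (W (a+u2) y1 * W (b+v2) y1) * Real.sqrt (W u2 y2 * W v2 y2)) :=
        Finset.sum_congr rfl fun u2 _ => Finset.sum_comm
    _ = ∑ u2 : G, ∑ v2 : G, 1/q * ((∑ y : Y, Real.sqrt (W (a+u2) y * W (b+v2) y)) *
          (∑ y : Y, Real.sqrt (W u2 y * W v2 y))) := by
        refine Finset.sum_congr rfl fun u2 _ => Finset.sum_congr rfl fun v2 _ => ?_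
        rw [Finset.sum_mul_sum, Finset.mul_sum]
        exact Finset.sum_congr rfl fun y1 _ => by rw [Finset.mul_sum]
    _ = (1/q) * ∑ u2 : G, ∑ v2 : G, (∑ y : Y, Real.sqrt (W (a+u2) y * W (b+v2) y)) *
          (∑ y : Y, Real.sqrt (W u2 y * W v2 y)) := by
        rw [Finset.mul_sum]
        exact Finset.sum_congr rfl fun u2 _ => by rw [Finset.mul_sum]

/-- for a proper subgroup `H` of `G`,
`Z^H_max(W⁺) ≤ (Z^H_max(W))²` and `Z^H_max(W⁻) ≤ (q+2)·Z^H_max(W)`. -/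
theorem Zmax_polar_transform_bounds
    {G Y : Type} [Fintype G] [AddCommGroup G] [Fintype Y]
    (W : G → Y → ℝ) (hW0 : ∀ x y, 0 ≤ W x y) (hW1 : ∀ x, ∑ y, W x y = 1)
    (H : AddSubgroup G) (hH : H ≠ ⊤) :
    ZmaxOff (polarPlus W) H ≤ (ZmaxOff W H) ^ 2 ∧
    ZmaxOff (polarMinus W) H ≤ ((Fintype.card G : ℝ) + 2) * ZmaxOff W H := by
  classical
  set q : ℝ := (Fintype.card G : ℝ) with hq
  have hq0 : (0:ℝ) < q := by
    rw [hq]; exact_mod_cast Fintype.card_pos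
  set M : ℝ := ZmaxOff W H with hM
  -- nonemptiness of the index type
  have hex : ∃ d : G, d ∉ H := by
    by_contra h
    push_neg at h
    exact hH ((AddSubgroup.eq_top_iff' H).mpr h)
  have hne : Nonempty {d : G // d ∉ H} := ⟨⟨hex.choose, hex.choose_spec⟩⟩
  have hfin : Finite {d : G // d ∉ H} := Subtype.finite
  have hM0 : 0 ≤ M := le_trans (Zd_nonneg W hex.choose)
    (Zd_le_ZmaxOff W H hex.choose_spec)
  constructor
  · -- plus part
    refine ciSup_le fun d => ?_
    rw [Zd_polarPlus W hW0]
    exact pow_le_pow_left₀ (Zd_nonneg W _) (Zd_le_ZmaxOff W H d.2) 2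
  · -- minus part
    refine ciSup_le fun dd => ?_
    obtain ⟨d, hd⟩ := dd
    -- main bound: Zd (polarMinus W) d ≤ q * M
    have key : Zd (polarMinus W) d ≤ q * M := by
      have step1 : Zd (polarMinus W) d
          ≤ 1/q * ∑ a : G, (1/q *
              ∑ u2 : G, ∑ v2 : G, Zpair W (a + u2) ((a + d) + v2) * Zpair W u2 v2) := by
        unfold Zd
        refine mul_le_mul_of_nonneg_left ?_ (by positivity)
        exact Finset.sum_le_sum fun a _ => Zpair_polarMinus_le W hW0 a (a + d)
      have reindex : ∀ a u2 : G,
          (∑ v2 : G, Zpair W (a + u2) ((a + d) + v2) * Zpair W u2 v2)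
            = ∑ e : G, Zpair W (a + u2) ((a + u2) + (d + e)) * Zpair W u2 (u2 + e) := by
        intro a u2
        rw [← Equiv.sum_comp (Equiv.addLeft u2)
          (fun v2 => Zpair W (a + u2) ((a + d) + v2) * Zpair W u2 v2)]
        refine Finset.sum_congr rfl fun e _ => ?_
        simp only [Equiv.coe_addLeft]
        rw [show (a + d) + (u2 + e) = (a + u2) + (d + e) by abel]
      have step2 : 1/q * ∑ a : G, (1/q *
              ∑ u2 : G, ∑ v2 : G, Zpair W (a + u2) ((a + d) + v2) * Zpair W u2 v2)
          = ∑ e : G, (1/q * (1/q *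
              ∑ a : G, ∑ u2 : G, Zpair W (a + u2) ((a + u2) + (d + e)) * Zpair W u2 (u2 + e))) := by
        calc 1/q * ∑ a : G, (1/q *
                ∑ u2 : G, ∑ v2 : G, Zpair W (a + u2) ((a + d) + v2) * Zpair W u2 v2)
            = 1/q * ∑ a : G, (1/q *
                ∑ u2 : G, ∑ e : G, Zpair W (a + u2) ((a + u2) + (d + e)) * Zpair W u2 (u2 + e)) := by
              congr 1
              exact Finset.sum_congr rfl fun a _ => by
                rw [Finset.sum_congr rfl fun u2 _ => reindex a u2]
          _ = 1/q * (1/q * ∑ a : G, ∑ u2 : G, ∑ e : G,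
                Zpair W (a + u2) ((a + u2) + (d + e)) * Zpair W u2 (u2 + e)) := by
              rw [← Finset.mul_sum]
          _ = 1/q * (1/q * ∑ e : G, ∑ a : G, ∑ u2 : G,
                Zpair W (a + u2) ((a + u2) + (d + e)) * Zpair W u2 (u2 + e)) := by
              congr 2
              calc (∑ a : G, ∑ u2 : G, ∑ e : G,
                      Zpair W (a + u2) ((a + u2) + (d + e)) * Zpair W u2 (u2 + e))
                  = ∑ a : G, ∑ e : G, ∑ u2 : G,
                      Zpair W (a + u2) ((a + u2) + (d + e)) * Zpair W u2 (u2 + e) :=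
                    Finset.sum_congr rfl fun a _ => Finset.sum_comm
                _ = ∑ e : G, ∑ a : G, ∑ u2 : G,
                      Zpair W (a + u2) ((a + u2) + (d + e)) * Zpair W u2 (u2 + e) :=
                    Finset.sum_comm
          _ = ∑ e : G, (1/q * (1/q *
                ∑ a : G, ∑ u2 : G, Zpair W (a + u2) ((a + u2) + (d + e)) * Zpair W u2 (u2 + e))) := by
              rw [Finset.mul_sum, Finset.mul_sum]
      have perE : ∀ e : G, 1/q * (1/q *
          ∑ a : G, ∑ u2 : G, Zpair W (a + u2) ((a + u2) + (d + e)) * Zpair W u2 (u2 + e)) ≤ M := by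
        intro e
        by_cases he : e ∈ H
        · -- e ∈ H : then d + e ∉ H; bound the second factor by 1
          have hde : d + e ∉ H := by
            intro hmem
            exact hd (by simpa using H.sub_mem hmem he)
          have hsum : (∑ a : G, ∑ u2 : G,
              Zpair W (a + u2) ((a + u2) + (d + e)) * Zpair W u2 (u2 + e))
              ≤ ∑ a : G, ∑ u2 : G, Zpair W (a + u2) ((a + u2) + (d + e)) := by
            refine Finset.sum_le_sum fun a _ => Finset.sum_le_sum fun u2 _ => ?_
            calc Zpair W (a + u2) ((a + u2) + (d + e)) * Zpair W u2 (u2 + e)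
                ≤ Zpair W (a + u2) ((a + u2) + (d + e)) * 1 :=
                  mul_le_mul_of_nonneg_left (Zpair_le_one W hW0 hW1 _ _) (Zpair_nonneg W _ _)
              _ = Zpair W (a + u2) ((a + u2) + (d + e)) := mul_one _
          have hsum2 : (∑ a : G, ∑ u2 : G, Zpair W (a + u2) ((a + u2) + (d + e)))
              = q * ∑ x : G, Zpair W x (x + (d + e)) := by
            calc (∑ a : G, ∑ u2 : G, Zpair W (a + u2) ((a + u2) + (d + e)))
                = ∑ u2 : G, ∑ a : G, Zpair W (a + u2) ((a + u2) + (d + e)) := Finset.sum_comm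
              _ = ∑ u2 : G, ∑ x : G, Zpair W x (x + (d + e)) :=
                  Finset.sum_congr rfl fun u2 _ =>
                    Equiv.sum_comp (Equiv.addRight u2) (fun x => Zpair W x (x + (d + e)))
              _ = q * ∑ x : G, Zpair W x (x + (d + e)) := by
                  rw [Finset.sum_const, Finset.card_univ, nsmul_eq_mul, hq]
          calc 1/q * (1/q * ∑ a : G, ∑ u2 : G,
                Zpair W (a + u2) ((a + u2) + (d + e)) * Zpair W u2 (u2 + e))
              ≤ 1/q * (1/q * (q * ∑ x : G, Zpair W x (x + (d + e)))) := by
                rw [← hsum2]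
                exact mul_le_mul_of_nonneg_left
                  (mul_le_mul_of_nonneg_left hsum (by positivity)) (by positivity)
            _ = 1/q * ∑ x : G, Zpair W x (x + (d + e)) := by
                field_simp
            _ = Zd W (d + e) := rfl
            _ ≤ M := Zd_le_ZmaxOff W H hde
        · -- e ∉ H : bound the first factor by 1
          have hsum : (∑ a : G, ∑ u2 : G,
              Zpair W (a + u2) ((a + u2) + (d + e)) * Zpair W u2 (u2 + e))
              ≤ ∑ a : G, ∑ u2 : G, Zpair W u2 (u2 + e) := by
            refine Finset.sum_le_sum fun a _ => Finset.sum_le_sum fun u2 _ => ?_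
            calc Zpair W (a + u2) ((a + u2) + (d + e)) * Zpair W u2 (u2 + e)
                ≤ 1 * Zpair W u2 (u2 + e) :=
                  mul_le_mul_of_nonneg_right (Zpair_le_one W hW0 hW1 _ _) (Zpair_nonneg W _ _)
              _ = Zpair W u2 (u2 + e) := one_mul _
          have hsum2 : (∑ a : G, ∑ u2 : G, Zpair W u2 (u2 + e))
              = q * ∑ u2 : G, Zpair W u2 (u2 + e) := by
            rw [Finset.sum_const, Finset.card_univ, nsmul_eq_mul, hq]
          calc 1/q * (1/q * ∑ a : G, ∑ u2 : G,
                Zpair W (a + u2) ((a + u2) + (d + e)) * Zpair W u2 (u2 + e))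
              ≤ 1/q * (1/q * (q * ∑ u2 : G, Zpair W u2 (u2 + e))) := by
                rw [← hsum2]
                exact mul_le_mul_of_nonneg_left
                  (mul_le_mul_of_nonneg_left hsum (by positivity)) (by positivity)
            _ = 1/q * ∑ u2 : G, Zpair W u2 (u2 + e) := by
                field_simp
            _ = Zd W e := rfl
            _ ≤ M := Zd_le_ZmaxOff W H he
      calc Zd (polarMinus W) d
          ≤ ∑ e : G, (1/q * (1/q *
              ∑ a : G, ∑ u2 : G, Zpair W (a + u2) ((a + u2) + (d + e)) * Zpair W u2 (u2 + e))) := by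
            rw [← step2]; exact step1
        _ ≤ ∑ _e : G, M := Finset.sum_le_sum fun e _ => perE e
        _ = q * M := by rw [Finset.sum_const, Finset.card_univ, nsmul_eq_mul, hq]
    calc Zd (polarMinus W) d ≤ q * M := key
      _ ≤ (q + 2) * M := by nlinarith

end Main
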